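/- Let Γ₁ and Γ₂ be abelian groups, A an abelian group, k ≥ 0, and F : Γ₁ × Γ₂ → A a function such that: (a) every (k+1)-fold iterated discrete derivative of F in which at least one direction lies in Γ₁ × {0} vanishes identically; and (b) every k-fold iterated discrete derivative of F with all directions in {0} × Γ₂ vanishes identically. Then F is a polynomial of degree at most k on Γ₁ × Γ₂, i.e. every (k+1)-fold iterated discrete derivative of F (in arbitrary directions of Γ₁ × Γ₂) vanishes identically. -/
import Mathlib


/-- Discrete derivative of `f : G → A` in direction `g`. -/
def dderiv {G A : Type*} [AddCommGroup G] [AddCommGroup A] (g : G) (f : G → A) : G → A :=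
  fun x => f (x + g) - f x

section aux
variable {G A : Type*} [AddCommGroup G] [AddCommGroup A]

lemma dderiv_zero (g : G) : dderiv g (0 : G → A) = 0 := by
  funext x; simp [dderiv]

lemma foldr_dderiv_zero (l : List G) : l.foldr dderiv (0 : G → A) = 0 := by
  induction l with
  | nil => rfl
  | cons a t ih => simp [List.foldr, ih, dderiv_zero]

lemma dderiv_comm (a b : G) (f : G → A) :
    dderiv a (dderiv b f) = dderiv b (dderiv a f) := by
  funext x
  simp only [dderiv]
  rw [add_right_comm x b a]
  abel

lemma dderiv_foldr (g : G) (l : List G) (f : G → A) :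
    dderiv g (l.foldr dderiv f) = l.foldr dderiv (dderiv g f) := by
  induction l with
  | nil => rfl
  | cons a t ih =>
      show dderiv g (dderiv a _) = dderiv a _
      rw [dderiv_comm, ih]

lemma foldr_dderiv_perm {l₁ l₂ : List G} (h : l₁.Perm l₂) (f : G → A) :
    l₁.foldr dderiv f = l₂.foldr dderiv f := by
  induction h with
  | nil => rfl
  | cons a _ ih => simp [List.foldr, ih]
  | swap a b l => simp [List.foldr, dderiv_comm]
  | trans _ _ ih₁ ih₂ => rw [ih₁, ih₂]

lemma dderiv_add_dir (a b : G) (f : G → A) :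
    dderiv (a + b) f = dderiv a f + dderiv b f + dderiv a (dderiv b f) := by
  funext x
  simp only [dderiv, Pi.add_apply]
  rw [← add_assoc x a b]
  abel

end aux

theorem poly_of_split_directions {Γ₁ Γ₂ A : Type*}
    [AddCommGroup Γ₁] [AddCommGroup Γ₂] [AddCommGroup A]
    (k : ℕ) (F : Γ₁ × Γ₂ → A)
    (ha : ∀ l : List (Γ₁ × Γ₂), l.length = k + 1 → (∃ g ∈ l, g.2 = 0) →
      l.foldr dderiv F = 0)
    (hb : ∀ l : List (Γ₁ × Γ₂), l.length = k → (∀ g ∈ l, g.1 = 0) →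
      l.foldr dderiv F = 0) :
    ∀ l : List (Γ₁ × Γ₂), l.length = k + 1 → l.foldr dderiv F = 0 := by
  -- strengthened (a): any list of length ≥ k+1 containing a direction with second
  -- component 0 has vanishing derivative
  have ha' : ∀ l : List (Γ₁ × Γ₂), k + 1 ≤ l.length → (∃ g ∈ l, g.2 = 0) →
      l.foldr dderiv F = 0 := by
    have ha2 : ∀ (g : Γ₁ × Γ₂) (t : List (Γ₁ × Γ₂)), g.2 = 0 → k ≤ t.length →
        (g :: t).foldr dderiv F = 0 := by
      intro g t hg2 htlen
      have hsplit : t = t.take (t.length - k) ++ t.drop (t.length - k) :=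
        (List.take_append_drop _ t).symm
      have hdlen : (t.drop (t.length - k)).length = k := by
        rw [List.length_drop]; omega
      calc (g :: t).foldr dderiv F
          = dderiv g ((t.take (t.length - k) ++ t.drop (t.length - k)).foldr dderiv F) := by
            rw [← hsplit]; rfl
        _ = dderiv g ((t.take (t.length - k)).foldr dderiv ((t.drop (t.length - k)).foldr dderiv F)) := by
            rw [List.foldr_append]
        _ = (t.take (t.length - k)).foldr dderiv (dderiv g ((t.drop (t.length - k)).foldr dderiv F)) := by
            rw [dderiv_foldr]
        _ = (t.take (t.length - k)).foldr dderiv ((g :: t.drop (t.length - k)).foldr dderiv F) := rfl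
        _ = 0 := by
            rw [ha (g :: t.drop (t.length - k)) (by simp [hdlen]) ⟨g, by simp, hg2⟩,
              foldr_dderiv_zero]
    intro l hlen ⟨g, hg, hg2⟩
    obtain ⟨s₁, s₂, rfl⟩ := List.append_of_mem hg
    have hperm : (s₁ ++ g :: s₂).Perm (g :: (s₁ ++ s₂)) := List.perm_middle
    rw [foldr_dderiv_perm hperm]
    exact ha2 g (s₁ ++ s₂) hg2
      (by simp only [List.length_append, List.length_cons] at hlen ⊢; omega)
  -- strengthened (b)
  have hb' : ∀ l : List (Γ₁ × Γ₂), k ≤ l.length → (∀ g ∈ l, g.1 = 0) →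
      l.foldr dderiv F = 0 := by
    intro l hlen h1
    have hsplit : l = l.take (l.length - k) ++ l.drop (l.length - k) :=
      (List.take_append_drop _ l).symm
    have hdlen : (l.drop (l.length - k)).length = k := by
      rw [List.length_drop]; omega
    rw [hsplit, List.foldr_append,
      hb _ hdlen (fun g hg => h1 g (List.mem_of_mem_drop hg)), foldr_dderiv_zero]
  -- main induction: peel off mixed directions one by one
  have key : ∀ l₁ l₂ : List (Γ₁ × Γ₂), (∀ g ∈ l₂, g.1 = 0) →
      k + 1 ≤ l₁.length + l₂.length → (l₁ ++ l₂).foldr dderiv F = 0 := by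
    intro l₁
    induction l₁ with
    | nil =>
      intro l₂ h1 hlen
      simpa using hb' l₂ (by simp at hlen; omega) h1
    | cons g t ih =>
      intro l₂ h1 hlen
      obtain ⟨γ₁, γ₂⟩ := g
      have hg : (γ₁, γ₂) = ((γ₁, 0) : Γ₁ × Γ₂) + (0, γ₂) := by simp [Prod.ext_iff]
      have hG : ((γ₁, γ₂) :: (t ++ l₂)).foldr dderiv F
          = dderiv ((γ₁, 0) : Γ₁ × Γ₂) ((t ++ l₂).foldr dderiv F)
          + dderiv ((0, γ₂) : Γ₁ × Γ₂) ((t ++ l₂).foldr dderiv F)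
          + dderiv ((γ₁, 0) : Γ₁ × Γ₂) (dderiv ((0, γ₂) : Γ₁ × Γ₂) ((t ++ l₂).foldr dderiv F)) := by
        show dderiv (γ₁, γ₂) ((t ++ l₂).foldr dderiv F) = _
        rw [hg, dderiv_add_dir]
      have h1' : dderiv ((γ₁, 0) : Γ₁ × Γ₂) ((t ++ l₂).foldr dderiv F) = 0 := by
        have : (((γ₁, 0) : Γ₁ × Γ₂) :: (t ++ l₂)).foldr dderiv F = 0 :=
          ha' _ (by simp only [List.length_append, List.length_cons] at hlen ⊢; omega) ⟨(γ₁, 0), by simp, rfl⟩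
        exact this
      have h3' : dderiv ((γ₁, 0) : Γ₁ × Γ₂)
          (dderiv ((0, γ₂) : Γ₁ × Γ₂) ((t ++ l₂).foldr dderiv F)) = 0 := by
        have : (((γ₁, 0) : Γ₁ × Γ₂) :: ((0, γ₂) : Γ₁ × Γ₂) :: (t ++ l₂)).foldr dderiv F = 0 :=
          ha' _ (by simp only [List.length_append, List.length_cons] at hlen ⊢; omega) ⟨(γ₁, 0), by simp, rfl⟩
        exact this
      have h2' : dderiv ((0, γ₂) : Γ₁ × Γ₂) ((t ++ l₂).foldr dderiv F) = 0 := by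
        have heq : dderiv ((0, γ₂) : Γ₁ × Γ₂) ((t ++ l₂).foldr dderiv F)
            = (t ++ (((0, γ₂) : Γ₁ × Γ₂) :: l₂)).foldr dderiv F := by
          rw [List.foldr_append, dderiv_foldr, List.foldr_append]
          rfl
        rw [heq]
        apply ih
        · intro g hg
          rcases List.mem_cons.mp hg with h | h
          · rw [h]
          · exact h1 g h
        · simp at hlen ⊢; omega
      show (((γ₁, γ₂) : Γ₁ × Γ₂) :: (t ++ l₂)).foldr dderiv F = 0
      rw [hG, h1', h2']
      simp [dderiv_zero]
  intro l hlen
  simpa using key l [] (by simp) (by simp [hlen])
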